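/- arXiv:1509.02178 — 2 statements merged into one kernel-verified Lean document; each statement's English description precedes it below -/
import Mathlib

section
/- Let κ, κ' : [0,θ] → ℝ be continuous with κ(x) ≥ κ'(x) for all x ∈ [0,θ], and suppose 𝔰_{κ'} > 0 and 𝔰_κ > 0 on (0,θ]. Then σ_κ^{(t)}(θ) ≥ σ_{κ'}^{(t)}(θ) for all t ∈ [0,1]. -/
/-!
Let `s = 𝔰_κ` and `u = 𝔰_{κ'}`. Their Wronskian `W = s' u - s u'` vanishes at `0` and has
derivative `(κ' - κ) s u ≤ 0`, so `W ≤ 0` on `[0, θ]`. Since `(s / u)' = W / u²`, the ratio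
`s / u` is antitone on `(0, θ]`; comparing it at `tθ` and `θ` gives the claim.
-/

open Set

/-- `s` is the generalized sin-function for curvature `κ` on `[0, L]`. -/
def IsSinSolution (κ s s' : ℝ → ℝ) (L : ℝ) : Prop :=
  s 0 = 0 ∧ s' 0 = 1 ∧
    ∀ x ∈ Set.Icc (0:ℝ) L, HasDerivAt s (s' x) x ∧ HasDerivAt s' (-(κ x * s x)) x

def wronskian (s s' u u' : ℝ → ℝ) (x : ℝ) : ℝ :=
  s' x * u x - s x * u' x

namespace IsSinSolution

variable {κ κ' s s' u u' : ℝ → ℝ} {L : ℝ}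

theorem hasDerivAt_wronskian (hs : IsSinSolution κ s s' L) (hu : IsSinSolution κ' u u' L)
    {x : ℝ} (hx : x ∈ Icc 0 L) :
    HasDerivAt (wronskian s s' u u') ((κ' x - κ x) * (s x * u x)) x := by
  obtain ⟨hs_deriv, hs'_deriv⟩ := hs.2.2 x hx
  obtain ⟨hu_deriv, hu'_deriv⟩ := hu.2.2 x hx
  exact ((hs'_deriv.mul hu_deriv).sub (hs_deriv.mul hu'_deriv)).congr_deriv (by ring)

theorem wronskian_nonpos (hs : IsSinSolution κ s s' L) (hu : IsSinSolution κ' u u' L)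
    (hge : ∀ x ∈ Icc 0 L, κ' x ≤ κ x)
    (hspos : ∀ r ∈ Ioc 0 L, 0 < s r) (hupos : ∀ r ∈ Ioc 0 L, 0 < u r)
    {x : ℝ} (hx : x ∈ Icc 0 L) :
    wronskian s s' u u' x ≤ 0 := by
  have hanti : AntitoneOn (wronskian s s' u u') (Icc 0 L) := by
    refine antitoneOn_of_hasDerivWithinAt_nonpos (convex_Icc 0 L)
      (fun y hy ↦ (hasDerivAt_wronskian hs hu hy).continuousAt.continuousWithinAt)
      (fun y hy ↦ (hasDerivAt_wronskian hs hu (interior_subset hy)).hasDerivWithinAt)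
      (fun y hy ↦ ?_)
    rw [interior_Icc] at hy
    have hsu : 0 < s y * u y :=
      mul_pos (hspos y (Ioo_subset_Ioc_self hy)) (hupos y (Ioo_subset_Ioc_self hy))
    exact mul_nonpos_of_nonpos_of_nonneg (sub_nonpos.2 (hge y (Ioo_subset_Icc_self hy))) hsu.le
  have hW0 : wronskian s s' u u' 0 = 0 := by
    simp [wronskian, hs.1, hu.1]
  simpa [hW0] using hanti (left_mem_Icc.2 (hx.1.trans hx.2)) hx hx.1

theorem antitoneOn_div (hs : IsSinSolution κ s s' L) (hu : IsSinSolution κ' u u' L)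
    (hge : ∀ x ∈ Icc 0 L, κ' x ≤ κ x)
    (hspos : ∀ r ∈ Ioc 0 L, 0 < s r) (hupos : ∀ r ∈ Ioc 0 L, 0 < u r) :
    AntitoneOn (fun x ↦ s x / u x) (Ioc 0 L) := by
  have hderiv : ∀ x ∈ Ioc 0 L,
      HasDerivAt (fun x ↦ s x / u x) (wronskian s s' u u' x / u x ^ 2) x := fun x hx ↦
    (hs.2.2 x (Ioc_subset_Icc_self hx)).1.div (hu.2.2 x (Ioc_subset_Icc_self hx)).1
      (hupos x hx).ne'
  refine antitoneOn_of_hasDerivWithinAt_nonpos (convex_Ioc 0 L)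
    (fun x hx ↦ (hderiv x hx).continuousAt.continuousWithinAt)
    (fun x hx ↦ (hderiv x (interior_subset hx)).hasDerivWithinAt)
    (fun x hx ↦ ?_)
  have hx' : x ∈ Ioc 0 L := interior_subset hx
  exact div_nonpos_of_nonpos_of_nonneg
    (wronskian_nonpos hs hu hge hspos hupos (Ioc_subset_Icc_self hx')) (sq_nonneg _)

end IsSinSolution

theorem distortion_monotone_general (θ : ℝ) (hθ : 0 < θ)
    (κ κ' s s' u u' : ℝ → ℝ)
    (hge : ∀ x ∈ Icc (0:ℝ) θ, κ' x ≤ κ x)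
    (hs : IsSinSolution κ s s' θ) (hu : IsSinSolution κ' u u' θ)
    (hspos : ∀ r ∈ Ioc (0:ℝ) θ, 0 < s r)
    (hupos : ∀ r ∈ Ioc (0:ℝ) θ, 0 < u r) :
    ∀ t ∈ Icc (0:ℝ) 1, u (t * θ) / u θ ≤ s (t * θ) / s θ := by
  rintro t ⟨ht0, ht1⟩
  rcases ht0.eq_or_lt with rfl | ht0
  · simp [hs.1, hu.1]
  have hθmem : θ ∈ Ioc 0 θ := right_mem_Ioc.2 hθ
  have htθ : t * θ ∈ Ioc 0 θ := ⟨mul_pos ht0 hθ, mul_le_of_le_one_left hθ.le ht1⟩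
  have hratio : s θ / u θ ≤ s (t * θ) / u (t * θ) :=
    hs.antitoneOn_div hu hge hspos hupos htθ hθmem htθ.2
  rw [div_le_div_iff₀ (hupos θ hθmem) (hupos _ htθ)] at hratio
  rw [div_le_div_iff₀ (hupos θ hθmem) (hspos θ hθmem)]
  linarith

/-- Monotonicity of generalized distortion coefficients: if `κ ≥ κ'` on `[0,θ]` then
`σ_κ^{(t)}(θ) ≥ σ_{κ'}^{(t)}(θ)` for all `t ∈ [0,1]`. -/
theorem distortion_monotone (θ : ℝ) (hθ : 0 < θ)
    (κ κ' s s' u u' : ℝ → ℝ)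
    (hκ : ContinuousOn κ (Icc 0 θ)) (hκ' : ContinuousOn κ' (Icc 0 θ))
    (hge : ∀ x ∈ Icc (0:ℝ) θ, κ' x ≤ κ x)
    (hs : IsSinSolution κ s s' θ) (hu : IsSinSolution κ' u u' θ)
    (hspos : ∀ r ∈ Ioc (0:ℝ) θ, 0 < s r)
    (hupos : ∀ r ∈ Ioc (0:ℝ) θ, 0 < u r) :
    ∀ t ∈ Icc (0:ℝ) 1, u (t * θ) / u θ ≤ s (t * θ) / s θ :=
  distortion_monotone_general θ hθ κ κ' s s' u u' hge hs hu hspos hupos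
end

section
/- Let κ : [0,θ] → ℝ be continuous with 𝔰_κ > 0 on (0,θ], κ⁻(s)=κ(θ-s), and define φ(t) = σ_{κ⁻}^{(1-t)}(θ) + σ_{κ⁺}^{(t)}(θ) - 1 for t ∈ [0,1]. Then φ solves φ''(t) + κ(tθ)θ²(φ(t)+1) = 0 with φ(0) = φ(1) = 0, and admits the representation φ(t) = ∫₀¹ g(τ,t) κ(τθ)θ² [σ_{κ⁻}^{(1-τ)}(θ) + σ_{κ⁺}^{(τ)}(θ)] dτ, where g is the Green function of [0,1]. -/
open Set

/-!
Put `φ(t) = σ⁻((1-t)θ)/σ⁻(θ) + σ⁺(tθ)/σ⁺(θ) - 1`. The chain rule turns `σ'' = -κσ` into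
`φ'' = -κ(tθ)θ²(φ + 1)`; the reflection `κ⁻(s) = κ(θ - s)` is what makes both summands see the
same coefficient `κ(tθ)`. The boundary values come from `σ(0) = 0`. The Green representation
holds for any `φ` vanishing at `0` and `1` with continuous `f = -φ''`: split `∫₀¹ g(τ,t) f(τ) dτ`
at `τ = t` and integrate by parts twice on each side; the boundary terms add up to `φ(t)`.
-/

theorem integral_sub_mul_eq_of_hasDerivAt {φ ψ f : ℝ → ℝ} {a b : ℝ} (c : ℝ)
    (hφ : ∀ x ∈ uIcc a b, HasDerivAt φ (ψ x) x)
    (hψ : ∀ x ∈ uIcc a b, HasDerivAt ψ (-f x) x) (hf : ContinuousOn f (uIcc a b)) :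
    ∫ x in a..b, (x - c) * f x = (φ b - (b - c) * ψ b) - (φ a - (a - c) * ψ a) := by
  have hint : ContinuousOn (fun x => (x - c) * f x) (uIcc a b) :=
    (continuousOn_id.sub continuousOn_const).mul hf
  refine intervalIntegral.integral_eq_sub_of_hasDerivAt (f := fun x => φ x - (x - c) * ψ x)
    (fun x hx => ?_) hint.intervalIntegrable
  exact ((hφ x hx).sub (((hasDerivAt_id' x).sub_const c).mul (hψ x hx))).congr_deriv (by ring)

theorem eq_integral_green_of_hasDerivAt {φ ψ f : ℝ → ℝ}
    (hφ : ∀ x ∈ Icc (0:ℝ) 1, HasDerivAt φ (ψ x) x)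
    (hψ : ∀ x ∈ Icc (0:ℝ) 1, HasDerivAt ψ (-f x) x) (hf : ContinuousOn f (Icc 0 1))
    (h0 : φ 0 = 0) (h1 : φ 1 = 0) {t : ℝ} (ht : t ∈ Icc (0:ℝ) 1) :
    φ t = ∫ τ in (0:ℝ)..1, min τ t * (1 - max τ t) * f τ := by
  have hsub_left : uIcc 0 t ⊆ Icc (0:ℝ) 1 := by
    rw [uIcc_of_le ht.1]; exact Icc_subset_Icc le_rfl ht.2
  have hsub_right : uIcc t 1 ⊆ Icc (0:ℝ) 1 := by
    rw [uIcc_of_le ht.2]; exact Icc_subset_Icc ht.1 le_rfl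
  have hint : ∀ {a b}, uIcc a b ⊆ Icc (0:ℝ) 1 →
      IntervalIntegrable (fun τ => min τ t * (1 - max τ t) * f τ) MeasureTheory.volume a b :=
    fun hs => (ContinuousOn.mul (by fun_prop) (hf.mono hs)).intervalIntegrable
  have hleft : ∫ τ in (0:ℝ)..t, min τ t * (1 - max τ t) * f τ =
      (1 - t) * ∫ τ in (0:ℝ)..t, (τ - 0) * f τ := by
    rw [← intervalIntegral.integral_const_mul]
    refine intervalIntegral.integral_congr fun τ hτ => ?_
    rw [uIcc_of_le ht.1] at hτ
    simp only [min_eq_left hτ.2, max_eq_right hτ.2]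
    ring
  have hright : ∫ τ in t..1, min τ t * (1 - max τ t) * f τ =
      -t * ∫ τ in t..1, (τ - 1) * f τ := by
    rw [← intervalIntegral.integral_const_mul]
    refine intervalIntegral.integral_congr fun τ hτ => ?_
    rw [uIcc_of_le ht.2] at hτ
    simp only [min_eq_right hτ.1, max_eq_left hτ.1]
    ring
  rw [← intervalIntegral.integral_add_adjacent_intervals (hint hsub_left) (hint hsub_right),
    hleft, hright,
    integral_sub_mul_eq_of_hasDerivAt 0 (fun x hx => hφ x (hsub_left hx))
      (fun x hx => hψ x (hsub_left hx)) (hf.mono hsub_left),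
    integral_sub_mul_eq_of_hasDerivAt 1 (fun x hx => hφ x (hsub_right hx))
      (fun x hx => hψ x (hsub_right hx)) (hf.mono hsub_right), h0, h1]
  ring

namespace IsSinSolution

variable {κ s s' : ℝ → ℝ} {L : ℝ}

theorem continuousOn (hs : IsSinSolution κ s s' L) : ContinuousOn s (Icc 0 L) :=
  fun x hx => (hs.2.2 x hx).1.continuousAt.continuousWithinAt

theorem hasDerivAt_comp (hs : IsSinSolution κ s s' L) {g : ℝ → ℝ} {c t : ℝ}
    (hg : ∀ x, HasDerivAt g c x) (ht : g t ∈ Icc 0 L) :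
    HasDerivAt (fun x => s (g x)) (s' (g t) * c) t ∧
      HasDerivAt (fun x => s' (g x) * c) (-(κ (g t) * s (g t) * c ^ 2)) t :=
  ⟨(hs.2.2 _ ht).1.comp t (hg t),
    (((hs.2.2 _ ht).2.comp t (hg t)).mul_const c).congr_deriv (by ring)⟩

end IsSinSolution

section Rescaling

variable {θ : ℝ} (hθ : 0 ≤ θ)
include hθ

theorem mapsTo_mul_Icc : MapsTo (fun t : ℝ => t * θ) (Icc 0 1) (Icc 0 θ) :=
  fun _ ht => ⟨mul_nonneg ht.1 hθ, mul_le_of_le_one_left hθ ht.2⟩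

theorem mapsTo_one_sub_mul_Icc : MapsTo (fun t : ℝ => (1 - t) * θ) (Icc 0 1) (Icc 0 θ) :=
  fun _ ht => mapsTo_mul_Icc hθ ⟨sub_nonneg.2 ht.2, sub_le_self 1 ht.1⟩

variable {κ sp sp' sm sm' : ℝ → ℝ}
  (hsp : IsSinSolution κ sp sp' θ) (hsm : IsSinSolution (fun r => κ (θ - r)) sm sm' θ)
include hsp hsm

theorem hasDerivAt_reflected_add_rescaled {t : ℝ} (ht : t ∈ Icc (0:ℝ) 1) :
    HasDerivAt (fun t => sm ((1 - t) * θ) / sm θ + sp (t * θ) / sp θ - 1)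
        (sm' ((1 - t) * θ) * -θ / sm θ + sp' (t * θ) * θ / sp θ) t ∧
      HasDerivAt (fun t => sm' ((1 - t) * θ) * -θ / sm θ + sp' (t * θ) * θ / sp θ)
        (-(κ (t * θ) * θ ^ 2 * (sm ((1 - t) * θ) / sm θ + sp (t * θ) / sp θ))) t := by
  obtain ⟨hp, hp'⟩ :=
    hsp.hasDerivAt_comp (fun _ => hasDerivAt_mul_const θ) (mapsTo_mul_Icc hθ ht)
  obtain ⟨hm, hm'⟩ := hsm.hasDerivAt_comp (g := fun x => (1 - x) * θ) (c := -θ)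
    (fun x => by simpa using ((hasDerivAt_id x).const_sub 1).mul_const θ)
    (mapsTo_one_sub_mul_Icc hθ ht)
  refine ⟨((hm.div_const _).add (hp.div_const _)).sub_const 1,
    ((hm'.div_const _).add (hp'.div_const _)).congr_deriv ?_⟩
  rw [show θ - (1 - t) * θ = t * θ by ring]
  ring

theorem continuousOn_reflected_add_rescaled (hκ : ContinuousOn κ (Icc 0 θ)) :
    ContinuousOn (fun t => κ (t * θ) * θ ^ 2 * (sm ((1 - t) * θ) / sm θ + sp (t * θ) / sp θ))
      (Icc 0 1) :=
  ((hκ.comp (by fun_prop) (mapsTo_mul_Icc hθ)).mul continuousOn_const).mul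
    (((hsm.continuousOn.comp (by fun_prop) (mapsTo_one_sub_mul_Icc hθ)).div_const _).add
      ((hsp.continuousOn.comp (by fun_prop) (mapsTo_mul_Icc hθ)).div_const _))

end Rescaling

/-- `φ(t) = σ_{κ⁻}^{(1-t)}(θ) + σ_{κ⁺}^{(t)}(θ) - 1` solves
`φ'' + κ(tθ)θ²(φ+1) = 0` with `φ(0) = φ(1) = 0`, and admits the Green-function
representation `φ(t) = ∫₀¹ g(τ,t) κ(τθ)θ² [σ_{κ⁻}^{(1-τ)}(θ) + σ_{κ⁺}^{(τ)}(θ)] dτ`. -/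
theorem phi_ode_and_green (θ : ℝ) (hθ : 0 < θ)
    (κ sp sp' sm sm' : ℝ → ℝ) (hκ : ContinuousOn κ (Icc 0 θ))
    (hsp : IsSinSolution κ sp sp' θ)
    (hsm : IsSinSolution (fun r => κ (θ - r)) sm sm' θ)
    (hppos : ∀ r ∈ Ioc (0:ℝ) θ, 0 < sp r)
    (hmpos : ∀ r ∈ Ioc (0:ℝ) θ, 0 < sm r) :
    (fun t : ℝ => sm ((1 - t) * θ) / sm θ + sp (t * θ) / sp θ - 1) 0 = 0 ∧
    (fun t : ℝ => sm ((1 - t) * θ) / sm θ + sp (t * θ) / sp θ - 1) 1 = 0 ∧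
    (∃ φ' : ℝ → ℝ, ∀ t ∈ Icc (0:ℝ) 1,
      HasDerivAt (fun t : ℝ => sm ((1 - t) * θ) / sm θ + sp (t * θ) / sp θ - 1) (φ' t) t ∧
      HasDerivAt φ'
        (-(κ (t * θ) * θ ^ 2 * ((sm ((1 - t) * θ) / sm θ + sp (t * θ) / sp θ - 1) + 1))) t) ∧
    (∀ t ∈ Icc (0:ℝ) 1,
      sm ((1 - t) * θ) / sm θ + sp (t * θ) / sp θ - 1 =
        ∫ τ in (0:ℝ)..1,
          (min τ t * (1 - max τ t)) * κ (τ * θ) * θ ^ 2 *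
            (sm ((1 - τ) * θ) / sm θ + sp (τ * θ) / sp θ)) := by
  have hφ0 : sm ((1 - 0) * θ) / sm θ + sp (0 * θ) / sp θ - 1 = 0 := by
    simp [hsp.1, (hmpos θ ⟨hθ, le_rfl⟩).ne']
  have hφ1 : sm ((1 - 1) * θ) / sm θ + sp (1 * θ) / sp θ - 1 = 0 := by
    simp [hsm.1, (hppos θ ⟨hθ, le_rfl⟩).ne']
  have hderiv := fun t (ht : t ∈ Icc (0:ℝ) 1) =>
    hasDerivAt_reflected_add_rescaled hθ.le hsp hsm ht
  refine ⟨hφ0, hφ1, ⟨_, fun t ht => ⟨(hderiv t ht).1, by simpa using (hderiv t ht).2⟩⟩,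
    fun t ht => ?_⟩
  exact (eq_integral_green_of_hasDerivAt (fun x hx => (hderiv x hx).1)
    (fun x hx => (hderiv x hx).2) (continuousOn_reflected_add_rescaled hθ.le hsp hsm hκ)
    hφ0 hφ1 ht).trans (intervalIntegral.integral_congr fun τ _ => by ring)
end
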